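/- For every k ≥ 2, in A[w]: e_k(w) = Σ_{i=0}^{k-2} S_{k-2,k-2-i}(D₂, D₃, …, D_{k-1}) · (w² + w)^{2^i}; that is, expanding e_k in powers of [1]_w = w² + w as e_k(w) = Σ_{i=0}^{k-2} T_{k,i}·(w²+w)^{2^i}, the coefficients are T_{k,i} = S_{k-2,k-2-i}(D₂,…,D_{k-1}). -/
import Mathlib


noncomputable section

open Polynomial
open scoped Classical

/-- The defining polynomial `Y² + Y + (X³ + X + 1)` over `𝔽₂[X]`,
viewed as a polynomial in `Y` with coefficients in `𝔽₂[X]`. -/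
def curveEq : Polynomial (Polynomial (ZMod 2)) :=
  X ^ 2 + X + C (X ^ 3 + X + 1)

/-- The ring `A = 𝔽₂[X,Y]/(Y² + Y + X³ + X + 1)`. -/
abbrev A : Type := AdjoinRoot curveEq

/-- The image `x` of `X` in `A`. -/
def aX : A := AdjoinRoot.of curveEq (X : Polynomial (ZMod 2))

/-- The image `y` of `Y` in `A`. -/
def aY : A := AdjoinRoot.root curveEq

/-- The bracket `[j]_x = x^{2^j} + x ∈ A`. -/
def brX (j : ℕ) : A := aX ^ 2 ^ j + aX

/-- The monomials `xⁱyʲ` with `j ∈ {0,1}` and `2i + 3j < k`. -/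
def monoSet (k : ℕ) : Finset A :=
  ((Finset.range k ×ˢ Finset.range 2).filter fun p => 2 * p.1 + 3 * p.2 < k).image
    fun p => aX ^ p.1 * aY ^ p.2

/-- `A_{<k}` : the `𝔽₂`-linear span of the monomials `xⁱyʲ` with `j ∈ {0,1}`
and `2i + 3j < k`, realized as the finite set of all subset sums. -/
def Alt (k : ℕ) : Finset A := (monoSet k).powerset.image fun s => s.sum id

/-- `t_k := x^{k/2}` if `k` is even, `t_k := y·x^{(k-3)/2}` if `k` is odd. -/
def tk (k : ℕ) : A := if Even k then aX ^ (k / 2) else aY * aX ^ ((k - 3) / 2)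

/-- `e_k(w) := ∏_{a ∈ A_{<k}} (w + a) ∈ A[w]`. -/
def ePoly (k : ℕ) : Polynomial A := ∏ a ∈ Alt k, (X + C a)

/-- `D_k := e_k(t_k)`, the product of all monic elements of `A` of degree `k`. -/
def Dk (k : ℕ) : A := (ePoly k).eval (tk k)

variable (K : Type) [Field K] [Algebra A K]

/-- The coefficients `a_j = 1/d_j` of the exponential function:
`a₀ = a₁ = 1` and `a_j = ([1]_x·a_{j-1}² + a_{j-2}⁴)/[j]_x` for `j ≥ 2`. -/
def aSeq : ℕ → K
  | 0 => 1
  | 1 => 1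
  | (j + 2) =>
      (algebraMap A K (brX 1) * (aSeq (j + 1)) ^ 2 + (aSeq j) ^ 4) /
        algebraMap A K (brX (j + 2))

/-- The coefficients `b_j = 1/ℓ_j` of the logarithm function:
`b₀ = b₁ = 1` and `b_j = ([1]_x^{2^{j-1}}·b_{j-1} + b_{j-2})/[j]_x` for `j ≥ 2`. -/
def bSeq : ℕ → K
  | 0 => 1
  | 1 => 1
  | (j + 2) =>
      (algebraMap A K (brX 1) ^ 2 ^ (j + 1) * bSeq (j + 1) + bSeq j) /
        algebraMap A K (brX (j + 2))

/-- `p_k(w) := Σ_{j=0}^{k} a_j·b_{k-j}^{2^j}·w^{2^j} ∈ K[w]`. -/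
def pPoly (k : ℕ) : Polynomial K :=
  ∑ j ∈ Finset.range (k + 1), C (aSeq K j * (bSeq K (k - j)) ^ 2 ^ j) * X ^ 2 ^ j

/-- `S_{n,r}(x₁,…,x_n) := Σ_{n ≥ i₁ > i₂ > … > i_r ≥ 1} ∏_{j=1}^{r}
x_{i_j}^{2^{n-j+1-i_j}}`, with `S_{n,0} = 1` and `S_{n,r} = 0` for `r > n`. -/
def Ssum (R : Type*) [CommRing R] (n r : ℕ) (x : ℕ → R) : R :=
  ∑ f ∈ Finset.univ.filter
      (fun f : Fin r → Fin (n + 1) => StrictAnti f ∧ ∀ j, 1 ≤ (f j : ℕ)),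
    ∏ j : Fin r, x (f j) ^ 2 ^ (n - (j : ℕ) - (f j : ℕ))

section Aux

def mono (p : ℕ × ℕ) : A := aX ^ p.1 * aY ^ p.2

lemma curveEq_monic : curveEq.Monic := by
  unfold curveEq; monicity!

lemma curveEq_degree : curveEq.degree = 2 := by
  unfold curveEq; compute_degree!

lemma curveEq_dvd_eq_zero {p : Polynomial (Polynomial (ZMod 2))} (hd : p.degree < 2)
    (h : curveEq ∣ p) : p = 0 :=
  Polynomial.eq_zero_of_dvd_of_degree_lt h (curveEq_degree ▸ hd)

instance instCharPA : CharP A 2 := by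
  constructor
  intro x
  have h1 : (x : A) = AdjoinRoot.mk curveEq (x : Polynomial (Polynomial (ZMod 2))) := by simp
  have hR := CharP.cast_eq_zero_iff (Polynomial (Polynomial (ZMod 2))) 2 x
  rw [h1, AdjoinRoot.mk_eq_zero]
  constructor
  · intro h
    apply hR.mp
    apply curveEq_dvd_eq_zero _ h
    rcases eq_or_ne ((x : Polynomial (Polynomial (ZMod 2)))) 0 with h0 | h0
    · rw [h0, Polynomial.degree_zero]; decide
    · calc ((x : Polynomial (Polynomial (ZMod 2)))).degree ≤ (0:ℕ) := Polynomial.degree_natCast_le x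
           _ < 2 := by decide
  · intro h
    rw [hR.mpr h]
    exact dvd_zero _


lemma mono_sum_eq_zero {S : Finset (ℕ × ℕ)} (hS : ∀ p ∈ S, p.2 < 2)
    (h : ∑ p ∈ S, mono p = 0) : S = ∅ := by
  have key : ∑ p ∈ S, mono p
      = AdjoinRoot.mk curveEq (∑ p ∈ S, C ((X:Polynomial (ZMod 2)) ^ p.1) * X ^ p.2) := by
    rw [map_sum]
    refine Finset.sum_congr rfl fun p _ => ?_
    simp only [map_mul, map_pow, AdjoinRoot.mk_C, AdjoinRoot.mk_X]
    rfl
  rw [key, AdjoinRoot.mk_eq_zero] at h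
  have hP0 : (∑ p ∈ S, C ((X:Polynomial (ZMod 2)) ^ p.1) * X ^ p.2) = 0 := by
    apply curveEq_dvd_eq_zero _ h
    refine lt_of_le_of_lt (Polynomial.degree_sum_le _ _) ?_
    refine lt_of_le_of_lt (Finset.sup_le fun p hp => ?_) (?_ : (1:WithBot ℕ) < 2)
    · refine le_trans (Polynomial.degree_mul_le _ _) ?_
      have hp2 : p.2 ≤ 1 := by have := hS p hp; omega
      have hX : (X ^ p.2 : Polynomial (Polynomial (ZMod 2))).degree ≤ (1:ℕ) := by
        rw [Polynomial.degree_X_pow]; exact_mod_cast hp2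
      refine le_trans (add_le_add Polynomial.degree_C_le hX) (by simp)
    · decide
  by_contra hne
  obtain ⟨p, hp⟩ := Finset.nonempty_of_ne_empty hne
  have step : ∀ q ∈ S, ((C ((X:Polynomial (ZMod 2)) ^ q.1) * X ^ q.2).coeff p.2).coeff p.1
      = if q = p then (1 : ZMod 2) else 0 := by
    intro q hq
    rw [Polynomial.coeff_C_mul, Polynomial.coeff_X_pow]
    by_cases h1 : p.2 = q.2 <;> by_cases h2 : p.1 = q.1 <;>
      simp [h1, h2, Polynomial.coeff_X_pow, Prod.ext_iff, eq_comm]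
  have hc : (∑ q ∈ S, ((C ((X:Polynomial (ZMod 2)) ^ q.1) * X ^ q.2).coeff p.2).coeff p.1) = 0 := by
    rw [← Polynomial.finset_sum_coeff, ← Polynomial.finset_sum_coeff, hP0]
    simp
  rw [Finset.sum_congr rfl step, Finset.sum_ite_eq' S p _, if_pos hp] at hc
  exact one_ne_zero hc



def idx (k : ℕ) : Finset (ℕ × ℕ) :=
  (Finset.range k ×ˢ Finset.range 2).filter fun p => 2 * p.1 + 3 * p.2 < k

lemma mem_idx {k : ℕ} {p : ℕ × ℕ} : p ∈ idx k ↔ p.2 < 2 ∧ 2 * p.1 + 3 * p.2 < k := by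
  simp only [idx, Finset.mem_filter, Finset.mem_product, Finset.mem_range]
  omega

def qk (k : ℕ) : ℕ × ℕ := if Even k then (k / 2, 0) else ((k - 3) / 2, 1)

lemma tk_eq_mono (k : ℕ) : tk k = mono (qk k) := by
  unfold tk qk mono
  split <;> simp [mul_comm]

lemma monoSet_eq (k : ℕ) : monoSet k = (idx k).image mono := rfl

/-- char 2 sum of sums is sum over symmetric difference -/
lemma sum_add_sum (s t : Finset (ℕ × ℕ)) :
    (∑ p ∈ s, mono p) + ∑ p ∈ t, mono p = ∑ p ∈ (s ∪ t) \ (s ∩ t), mono p := by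
  rw [← Finset.sum_union_inter, ← Finset.sum_sdiff (Finset.inter_subset_union (s := s) (t := t))]
  rw [add_assoc, CharTwo.add_self_eq_zero, add_zero]

lemma mono_inj {p q : ℕ × ℕ} (hp : p.2 < 2) (hq : q.2 < 2) (h : mono p = mono q) : p = q := by
  by_contra hne
  have hsum : ∑ r ∈ ({p, q} : Finset (ℕ × ℕ)), mono r = 0 := by
    rw [Finset.sum_pair hne, h, CharTwo.add_self_eq_zero]
  have hlt : ∀ r ∈ ({p, q} : Finset (ℕ × ℕ)), r.2 < 2 := by
    intro r hr
    rcases Finset.mem_insert.mp hr with rfl | hr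
    · exact hp
    · rw [Finset.mem_singleton.mp hr]; exact hq
  have := mono_sum_eq_zero hlt hsum
  simp at this

lemma mem_Alt_iff {k : ℕ} {a : A} :
    a ∈ Alt k ↔ ∃ s ⊆ idx k, a = ∑ p ∈ s, mono p := by
  constructor
  · intro ha
    obtain ⟨t, ht, rfl⟩ := Finset.mem_image.mp ha
    rw [Finset.mem_powerset, monoSet_eq, Finset.subset_image_iff] at ht
    obtain ⟨s, hs, rfl⟩ := ht
    refine ⟨s, hs, ?_⟩
    rw [Finset.sum_image (fun p hp q hq hpq =>
      mono_inj (mem_idx.mp (hs hp)).1 (mem_idx.mp (hs hq)).1 hpq)]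
    rfl
  · rintro ⟨s, hs, rfl⟩
    apply Finset.mem_image.mpr
    refine ⟨s.image mono, Finset.mem_powerset.mpr
      (by rw [monoSet_eq]; exact Finset.image_subset_image hs), ?_⟩
    rw [Finset.sum_image (fun p hp q hq hpq =>
      mono_inj (mem_idx.mp (hs hp)).1 (mem_idx.mp (hs hq)).1 hpq)]
    rfl

lemma qk_spec {k : ℕ} (hk : 2 ≤ k) : (qk k).2 < 2 ∧ 2 * (qk k).1 + 3 * (qk k).2 = k := by
  unfold qk
  rcases Nat.even_or_odd k with he | ho
  · obtain ⟨m, rfl⟩ := he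
    simp only [if_pos (by exact ⟨m, rfl⟩ : Even (m + m))]
    constructor
    · omega
    · simp; omega
  · obtain ⟨m, rfl⟩ := ho
    rw [if_neg (by rw [Nat.even_iff]; omega : ¬ Even (2 * m + 1))]
    constructor
    · omega
    · simp; omega

lemma qk_notMem_idx {k : ℕ} (hk : 2 ≤ k) : qk k ∉ idx k := by
  intro h
  have := (mem_idx.mp h).2
  have := (qk_spec hk).2
  omega

lemma idx_succ {k : ℕ} (hk : 2 ≤ k) : idx (k + 1) = insert (qk k) (idx k) := by
  have hq := qk_spec hk
  ext p
  rw [Finset.mem_insert, mem_idx, mem_idx]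
  constructor
  · rintro ⟨h2, hlt⟩
    by_cases hp : 2 * p.1 + 3 * p.2 < k
    · exact Or.inr ⟨h2, hp⟩
    · left
      have hpk : 2 * p.1 + 3 * p.2 = k := by omega
      -- p and qk k have same weight k and both .2 < 2; weight determines (p.1,p.2) by parity
      have : p.2 = (qk k).2 := by omega
      have : p.1 = (qk k).1 := by omega
      exact Prod.ext ‹p.1 = (qk k).1› ‹p.2 = (qk k).2›
  · rintro (rfl | ⟨h2, hlt⟩)
    · exact ⟨hq.1, by omega⟩
    · exact ⟨h2, by omega⟩

lemma zero_mem_Alt (k : ℕ) : (0 : A) ∈ Alt k :=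
  mem_Alt_iff.mpr ⟨∅, Finset.empty_subset _, by simp⟩

lemma add_mem_Alt {k : ℕ} {a b : A} (ha : a ∈ Alt k) (hb : b ∈ Alt k) : a + b ∈ Alt k := by
  obtain ⟨s, hs, rfl⟩ := mem_Alt_iff.mp ha
  obtain ⟨t, ht, rfl⟩ := mem_Alt_iff.mp hb
  exact mem_Alt_iff.mpr ⟨(s ∪ t) \ (s ∩ t),
    (Finset.sdiff_subset).trans (Finset.union_subset hs ht), (sum_add_sum s t)⟩

lemma tk_notMem_Alt {k : ℕ} (hk : 2 ≤ k) : tk k ∉ Alt k := by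
  intro h
  obtain ⟨s, hs, hsum⟩ := mem_Alt_iff.mp h
  have hq := qk_spec hk
  have hqs : qk k ∉ s := fun hc => qk_notMem_idx hk (hs hc)
  have h0 : ∑ p ∈ insert (qk k) s, mono p = 0 := by
    rw [Finset.sum_insert hqs, ← tk_eq_mono, hsum, CharTwo.add_self_eq_zero]
  have := mono_sum_eq_zero (fun p hp => by
    rcases Finset.mem_insert.mp hp with rfl | hp
    · exact hq.1
    · exact (mem_idx.mp (hs hp)).1) h0
  simp at this

lemma Alt_succ {k : ℕ} (hk : 2 ≤ k) :
    Alt (k + 1) = Alt k ∪ (Alt k).image (fun a => tk k + a) := by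
  ext a
  rw [Finset.mem_union, Finset.mem_image]
  constructor
  · intro h
    obtain ⟨s, hs, rfl⟩ := mem_Alt_iff.mp h
    rw [idx_succ hk] at hs
    by_cases hqs : qk k ∈ s
    · right
      refine ⟨∑ p ∈ s.erase (qk k), mono p, mem_Alt_iff.mpr ⟨s.erase (qk k), ?_, rfl⟩, ?_⟩
      · intro p hp
        have := hs (Finset.mem_of_mem_erase hp)
        rcases Finset.mem_insert.mp this with rfl | h'
        · exact absurd rfl (Finset.ne_of_mem_erase hp)
        · exact h'
      · rw [tk_eq_mono, Finset.add_sum_erase _ _ hqs]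
    · left
      refine mem_Alt_iff.mpr ⟨s, fun p hp => ?_, rfl⟩
      rcases Finset.mem_insert.mp (hs hp) with rfl | h'
      · exact absurd hp hqs
      · exact h'
  · rintro (h | ⟨b, hb, rfl⟩)
    · obtain ⟨s, hs, rfl⟩ := mem_Alt_iff.mp h
      exact mem_Alt_iff.mpr ⟨s, hs.trans (by rw [idx_succ hk]; exact Finset.subset_insert _ _), rfl⟩
    · obtain ⟨s, hs, rfl⟩ := mem_Alt_iff.mp hb
      have hqs : qk k ∉ s := fun hc => qk_notMem_idx hk (hs hc)
      refine mem_Alt_iff.mpr ⟨insert (qk k) s, ?_, ?_⟩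
      · rw [idx_succ hk]; exact Finset.insert_subset_insert _ hs
      · rw [Finset.sum_insert hqs, tk_eq_mono]

lemma Alt_disjoint {k : ℕ} (hk : 2 ≤ k) :
    Disjoint (Alt k) ((Alt k).image (fun a => tk k + a)) := by
  rw [Finset.disjoint_left]
  rintro a ha hb
  obtain ⟨b, hb', rfl⟩ := Finset.mem_image.mp hb
  have : tk k = (tk k + b) + b := by rw [add_assoc, CharTwo.add_self_eq_zero, add_zero]
  exact tk_notMem_Alt hk (this ▸ add_mem_Alt ha hb')

lemma one_ne_zero_A : (1 : A) ≠ 0 := by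
  intro h
  have : ∑ p ∈ ({((0:ℕ),(0:ℕ))} : Finset (ℕ × ℕ)), mono p = 0 := by
    simp [mono, h]
  have := mono_sum_eq_zero (by simp) this
  simp at this

lemma idx_two : idx 2 = {((0:ℕ),(0:ℕ))} := by
  ext p
  rw [mem_idx, Finset.mem_singleton, Prod.ext_iff]
  omega

lemma Alt_two : Alt 2 = {0, 1} := by
  ext a
  rw [mem_Alt_iff, idx_two]
  constructor
  · rintro ⟨s, hs, rfl⟩
    rcases Finset.subset_singleton_iff.mp hs with rfl | rfl
    · simp
    · simp [mono]
  · intro h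
    rcases Finset.mem_insert.mp h with rfl | h
    · exact ⟨∅, Finset.empty_subset _, by simp⟩
    · rw [Finset.mem_singleton.mp h]
      exact ⟨{((0:ℕ),(0:ℕ))}, le_refl _, by simp [mono]⟩

lemma ePoly_two : ePoly 2 = X ^ 2 + X := by
  rw [ePoly, Alt_two, Finset.prod_pair (Ne.symm one_ne_zero_A)]
  simp only [map_zero, map_one, add_zero]
  ring

lemma ePoly_succ_prod {k : ℕ} (hk : 2 ≤ k) :
    ePoly (k + 1) = ePoly k * (ePoly k).comp (X + C (tk k)) := by
  rw [ePoly, Alt_succ hk, Finset.prod_union (Alt_disjoint hk),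
    Finset.prod_image (fun a _ b _ h => by exact add_left_cancel h)]
  congr 1
  rw [ePoly, Polynomial.prod_comp]
  refine Finset.prod_congr rfl fun a _ => ?_
  rw [Polynomial.add_comp, Polynomial.X_comp, Polynomial.C_comp, map_add, add_assoc]

lemma ePoly_comp_add {k : ℕ} (hk : 2 ≤ k) :
    ∀ t : A, (ePoly k).comp (X + C t) = ePoly k + C ((ePoly k).eval t) := by
  induction k, hk using Nat.le_induction with
  | base =>
    intro t
    rw [ePoly_two]
    rw [Polynomial.add_comp, Polynomial.pow_comp, Polynomial.X_comp]
    rw [add_pow_char (p := 2)]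
    simp only [Polynomial.eval_add, Polynomial.eval_pow, Polynomial.eval_X, map_add, map_pow]
    ring
  | succ k hk ih =>
    intro t
    have hrec : ePoly (k+1) = ePoly k ^ 2 + C (Dk k) * ePoly k := by
      rw [ePoly_succ_prod hk, ih (tk k)]
      rw [Dk]
      ring
    rw [hrec]
    simp only [Polynomial.add_comp, Polynomial.pow_comp, Polynomial.mul_comp,
      Polynomial.C_comp, ih t, Polynomial.eval_add, Polynomial.eval_pow,
      Polynomial.eval_mul, Polynomial.eval_C]
    rw [add_pow_char (p := 2)]
    simp only [Polynomial.C_add, Polynomial.C_mul, Polynomial.C_pow]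
    ring

lemma ePoly_succ {k : ℕ} (hk : 2 ≤ k) :
    ePoly (k + 1) = ePoly k ^ 2 + C (Dk k) * ePoly k := by
  rw [ePoly_succ_prod hk, ePoly_comp_add hk (tk k), Dk]
  ring

variable {R : Type*} [CommRing R]

lemma Ssum_zero_r (n : ℕ) (x : ℕ → R) : Ssum R n 0 x = 1 := by
  rw [Ssum, Finset.filter_true_of_mem (fun f _ => ⟨fun a => a.elim0, fun j => j.elim0⟩)]
  simp

lemma fin_strictAnti_le {r n : ℕ} {f : Fin r → Fin (n+1)} (hf : StrictAnti f)
    (m : ℕ) (hm : m < r) : (f ⟨m, hm⟩ : ℕ) + m ≤ (f ⟨0, Nat.lt_of_le_of_lt (Nat.zero_le m) hm⟩ : ℕ) := by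
  induction m with
  | zero => simp
  | succ i ih =>
    have hi : i < r := by omega
    have h1 : f ⟨i+1, hm⟩ < f ⟨i, hi⟩ := hf (by simp [Fin.lt_def])
    have h2 := ih hi
    rw [Fin.lt_def] at h1
    omega

lemma Ssum_eq_zero_of_lt {n r : ℕ} (h : n < r) (x : ℕ → R) : Ssum R n r x = 0 := by
  rw [Ssum]
  convert Finset.sum_empty
  rw [Finset.filter_eq_empty_iff]
  rintro f - ⟨hf, h1⟩
  have hr : 0 < r := by omega
  have h2 := fin_strictAnti_le hf (r-1) (by omega)
  have h3 := h1 ⟨r-1, by omega⟩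
  have h4 : (f ⟨0, hr⟩ : ℕ) ≤ n := Nat.lt_succ_iff.mp (f ⟨0, hr⟩).isLt
  omega

lemma Ssum_succ_succ (n r : ℕ) [CharP R 2] (x : ℕ → R) :
    Ssum R (n+1) (r+1) x = x (n+1) * Ssum R n r x + (Ssum R n (r+1) x) ^ 2 := by
  haveI : Fact (Nat.Prime 2) := ⟨by norm_num⟩
  haveI : ExpChar R 2 := ExpChar.prime (by norm_num)
  rw [Ssum]
  rw [← Finset.sum_filter_add_sum_filter_not _
    (fun f : Fin (r+1) → Fin (n+2) => f 0 = Fin.last (n+1))]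
  congr 1
  · -- branch A : f 0 = last
    rw [Ssum, Finset.mul_sum]
    rw [Finset.filter_filter]
    refine Finset.sum_bij'
      (i := fun f hf => fun j : Fin r =>
        (⟨min (f j.succ : ℕ) n, by omega⟩ : Fin (n+1)))
      (j := fun g hg => Fin.cases (Fin.last (n+1)) (fun j => (g j).castSucc))
      ?_ ?_ ?_ ?_ ?_
    · -- maps into target filter
      intro f hf
      rw [Finset.mem_filter] at hf ⊢
      obtain ⟨-, ⟨hanti, hge⟩, hlast⟩ := hf
      have hlt : ∀ j : Fin r, (f j.succ : ℕ) < n + 1 := by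
        intro j
        have : f j.succ < f 0 := hanti (by simp [Fin.pos_iff_ne_zero])
        rw [hlast] at this
        simpa [Fin.lt_def, Fin.last] using this
      refine ⟨Finset.mem_univ _, ?_, ?_⟩
      · intro a b hab
        have h2 := hanti (Fin.succ_lt_succ_iff.mpr hab)
        rw [Fin.lt_def] at h2
        have ha := hlt a; have hb := hlt b
        show ((⟨min (↑(f b.succ)) n, _⟩ : Fin (n+1))) < (⟨min (↑(f a.succ)) n, _⟩ : Fin (n+1))
        rw [Fin.lt_def]
        simp only [Fin.val_mk]
        omega
      · intro j
        have := hge j.succ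
        have := hlt j
        show 1 ≤ ((⟨min (↑(f j.succ)) n, _⟩ : Fin (n+1)) : ℕ)
        simp only [Fin.val_mk]
        omega
    · -- inverse maps into source filter
      intro g hg
      rw [Finset.mem_filter] at hg ⊢
      obtain ⟨-, hanti, hge⟩ := hg
      refine ⟨Finset.mem_univ _, ⟨?_, ?_⟩, by simp⟩
      · intro a b hab
        rcases Fin.eq_zero_or_eq_succ b with rfl | ⟨b', rfl⟩
        · exact absurd hab (by simp)
        · rcases Fin.eq_zero_or_eq_succ a with rfl | ⟨a', rfl⟩
          · simp only [Fin.cases_succ, Fin.cases_zero]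
            exact Fin.castSucc_lt_last _
          · simp only [Fin.cases_succ]
            exact Fin.castSucc_lt_castSucc_iff.mpr (hanti (Fin.succ_lt_succ_iff.mp hab))
      · intro j
        rcases Fin.eq_zero_or_eq_succ j with rfl | ⟨j', rfl⟩
        · simp [Fin.last]
        · simpa using hge j'
    · -- left inverse
      intro f hf
      rw [Finset.mem_filter] at hf
      obtain ⟨-, ⟨hanti, hge⟩, hlast⟩ := hf
      have hlt : ∀ j : Fin r, (f j.succ : ℕ) < n + 1 := by
        intro j
        have : f j.succ < f 0 := hanti (by simp [Fin.pos_iff_ne_zero])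
        rw [hlast] at this
        simpa [Fin.lt_def, Fin.last] using this
      funext j
      rcases Fin.eq_zero_or_eq_succ j with rfl | ⟨j', rfl⟩
      · change Fin.cases _ _ (0 : Fin (r+1)) = f 0
        rw [Fin.cases_zero]; exact hlast.symm
      · change Fin.cases _ _ (j'.succ) = f j'.succ
        rw [Fin.cases_succ]
        apply Fin.ext
        have := hlt j'
        simp [Fin.castSucc, Fin.castAdd, Fin.castLE]
        omega
    · -- right inverse
      intro g hg
      funext j
      simp only [Fin.cases_succ]
      apply Fin.ext
      simp [Fin.castSucc, Fin.castAdd, Fin.castLE, Nat.lt_succ_iff.mp (g j).isLt]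
    · -- values
      intro f hf
      rw [Finset.mem_filter] at hf
      obtain ⟨-, ⟨hanti, hge⟩, hlast⟩ := hf
      have hlt : ∀ j : Fin r, (f j.succ : ℕ) < n + 1 := by
        intro j
        have : f j.succ < f 0 := hanti (by simp [Fin.pos_iff_ne_zero])
        rw [hlast] at this
        simpa [Fin.lt_def, Fin.last] using this
      rw [Fin.prod_univ_succ]
      congr 1
      · rw [hlast]
        simp [Fin.last]
      · refine Finset.prod_congr rfl fun j _ => ?_
        have hj := hlt j
        have hmin : min (↑(f j.succ)) n = (f j.succ : ℕ) := by omega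
        show x ↑(f j.succ) ^ 2 ^ (n + 1 - (↑j + 1) - ↑(f j.succ))
            = x (min (↑(f j.succ)) n) ^ 2 ^ (n - ↑j - min (↑(f j.succ)) n)
        have he2 : n + 1 - ((j:ℕ) + 1) - (f j.succ : ℕ) = n - (j:ℕ) - (f j.succ : ℕ) := by omega
        rw [hmin, he2]
  · -- branch B : f 0 ≠ last
    rw [Ssum, sum_pow_char (p := 2)]
    rw [Finset.filter_filter]
    refine Finset.sum_bij'
      (i := fun f hf => fun j : Fin (r+1) =>
        (⟨min (f j : ℕ) n, by omega⟩ : Fin (n+1)))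
      (j := fun g hg => fun j => (g j).castSucc)
      ?_ ?_ ?_ ?_ ?_
    · intro f hf
      rw [Finset.mem_filter] at hf ⊢
      obtain ⟨-, ⟨hanti, hge⟩, hlast⟩ := hf
      have hlt : ∀ j : Fin (r+1), (f j : ℕ) < n + 1 := by
        intro j
        have h0 : f j ≤ f 0 := hanti.antitone (Fin.zero_le j)
        have h1 : (f 0 : ℕ) < n + 1 := by
          have := (f 0).isLt
          have : (f 0 : ℕ) ≠ n + 1 := fun hc => hlast (Fin.ext (by simp [Fin.last, hc]))
          omega
        have := Fin.le_def.mp h0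
        omega
      refine ⟨Finset.mem_univ _, ?_, ?_⟩
      · intro a b hab
        have h2 := hanti hab
        rw [Fin.lt_def] at h2
        have ha := hlt a; have hb := hlt b
        show ((⟨min (↑(f b)) n, _⟩ : Fin (n+1))) < (⟨min (↑(f a)) n, _⟩ : Fin (n+1))
        rw [Fin.lt_def]
        simp only [Fin.val_mk]
        omega
      · intro j
        have := hge j
        have := hlt j
        show 1 ≤ ((⟨min (↑(f j)) n, _⟩ : Fin (n+1)) : ℕ)
        simp only [Fin.val_mk]
        omega
    · intro g hg
      rw [Finset.mem_filter] at hg ⊢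
      obtain ⟨-, hanti, hge⟩ := hg
      refine ⟨Finset.mem_univ _, ⟨?_, ?_⟩, ?_⟩
      · intro a b hab
        exact Fin.castSucc_lt_castSucc_iff.mpr (hanti hab)
      · intro j
        simpa using hge j
      · intro hc
        have h2 : ((g 0).castSucc : Fin (n+2)) = Fin.last (n+1) := hc
        have h3 := congrArg Fin.val h2
        rw [Fin.coe_castSucc, Fin.val_last] at h3
        have h4 := (g 0).isLt
        clear hc h2
        omega
    · intro f hf
      rw [Finset.mem_filter] at hf
      obtain ⟨-, ⟨hanti, hge⟩, hlast⟩ := hf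
      have hlt : ∀ j : Fin (r+1), (f j : ℕ) < n + 1 := by
        intro j
        have h0 : f j ≤ f 0 := hanti.antitone (Fin.zero_le j)
        have h1 : (f 0 : ℕ) < n + 1 := by
          have := (f 0).isLt
          have : (f 0 : ℕ) ≠ n + 1 := fun hc => hlast (Fin.ext (by simp [Fin.last, hc]))
          omega
        have := Fin.le_def.mp h0
        omega
      funext j
      show ((⟨min (↑(f j)) n, _⟩ : Fin (n+1))).castSucc = f j
      apply Fin.ext
      have := hlt j
      rw [Fin.coe_castSucc, Fin.val_mk]
      omega
    · intro g hg
      funext j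
      show (⟨min ((g j).castSucc : ℕ) n, _⟩ : Fin (n+1)) = g j
      apply Fin.ext
      rw [Fin.val_mk, Fin.coe_castSucc]
      have := Nat.lt_succ_iff.mp (g j).isLt
      omega
    · intro f hf
      rw [Finset.mem_filter] at hf
      obtain ⟨-, ⟨hanti, hge⟩, hlast⟩ := hf
      have hlt : ∀ j : Fin (r+1), (f j : ℕ) < n + 1 := by
        intro j
        have h0 : f j ≤ f 0 := hanti.antitone (Fin.zero_le j)
        have h1 : (f 0 : ℕ) < n + 1 := by
          have := (f 0).isLt
          have : (f 0 : ℕ) ≠ n + 1 := fun hc => hlast (Fin.ext (by simp [Fin.last, hc]))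
          omega
        have := Fin.le_def.mp h0
        omega
      rw [← Finset.prod_pow]
      refine Finset.prod_congr rfl fun j _ => ?_
      have hje := fin_strictAnti_le hanti j.1 j.isLt
      simp only [Fin.mk_zero, Fin.eta] at hje
      have h1 : (f 0 : ℕ) < n + 1 := by
        have := (f 0).isLt
        have : (f 0 : ℕ) ≠ n + 1 := fun hc => hlast (Fin.ext (by simp [Fin.last, hc]))
        omega
      have hjn : (f j : ℕ) + (j : ℕ) ≤ n := by omega
      have hmin : min (f j : ℕ) n = (f j : ℕ) := by omega
      have he : n + 1 - (j:ℕ) - (f j : ℕ) = (n - (j:ℕ) - (f j : ℕ)) + 1 := by omega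
      show x ↑(f j) ^ 2 ^ (n + 1 - (j:ℕ) - (f j : ℕ))
          = (x (min (↑(f j)) n) ^ 2 ^ (n - (j:ℕ) - min (↑(f j)) n)) ^ 2
      rw [hmin, he, pow_succ, pow_mul]

end Aux


/-- For `k ≥ 2`, in `A[w]`:
`e_k(w) = Σ_{i=0}^{k-2} S_{k-2,k-2-i}(D₂,…,D_{k-1})·(w² + w)^{2^i}`;
that is, the coefficients of `e_k` expanded in powers of `[1]_w = w² + w` are
`T_{k,i} = S_{k-2,k-2-i}(D₂,…,D_{k-1})`. -/
theorem stmt13 (k : ℕ) (hk : 2 ≤ k) :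
    ePoly k =
      ∑ i ∈ Finset.range (k - 1),
        C (Ssum A (k - 2) (k - 2 - i) (fun m => Dk (m + 1))) *
          (X ^ 2 + X) ^ 2 ^ i := by
  induction k, hk using Nat.le_induction with
  | base =>
    rw [ePoly_two]
    simp [Ssum_zero_r]
  | succ k hk ih =>
    obtain ⟨m, rfl⟩ : ∃ m, k = m + 2 := ⟨k - 2, by omega⟩
    have e1 : m + 2 + 1 - 1 = m + 2 := by omega
    have e2 : m + 2 + 1 - 2 = m + 1 := by omega
    have e3 : m + 2 - 1 = m + 1 := by omega
    have e4 : m + 2 - 2 = m := by omega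
    simp only [e1, e2]
    simp only [e3, e4] at ih
    rw [ePoly_succ (by omega : 2 ≤ m + 2), ih]
    rw [Finset.sum_range_succ
      (fun i => C (Ssum A (m + 1) (m + 1 - i) (fun j => Dk (j + 1)))
        * ((X:Polynomial A) ^ 2 + X) ^ 2 ^ i) (m + 1)]
    have hlast : C (Ssum A (m + 1) (m + 1 - (m + 1)) (fun j => Dk (j + 1)))
        * ((X:Polynomial A) ^ 2 + X) ^ 2 ^ (m + 1) = ((X:Polynomial A) ^ 2 + X) ^ 2 ^ (m + 1) := by
      rw [Nat.sub_self, Ssum_zero_r, map_one, one_mul]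
    rw [hlast]
    have hsplit : ∀ i ∈ Finset.range (m + 1),
        C (Ssum A (m + 1) (m + 1 - i) (fun j => Dk (j + 1))) * ((X:Polynomial A) ^ 2 + X) ^ 2 ^ i
        = C (Dk (m + 2)) * (C (Ssum A m (m - i) (fun j => Dk (j + 1)))
              * ((X:Polynomial A) ^ 2 + X) ^ 2 ^ i)
          + C ((Ssum A m (m + 1 - i) (fun j => Dk (j + 1))) ^ 2)
              * ((X:Polynomial A) ^ 2 + X) ^ 2 ^ i := by
      intro i hi
      have hi' : i ≤ m := by have := Finset.mem_range.mp hi; omega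
      have h1 : m + 1 - i = (m - i) + 1 := by omega
      rw [h1, Ssum_succ_succ m (m - i) (fun j => Dk (j + 1))]
      have hD2 : m + 1 + 1 = m + 2 := by omega
      rw [hD2, map_add, map_mul, add_mul, mul_assoc]
    rw [Finset.sum_congr rfl hsplit, Finset.sum_add_distrib, ← Finset.mul_sum]
    have key : (∑ i ∈ Finset.range (m + 1),
          C (Ssum A m (m - i) (fun j => Dk (j + 1))) * ((X:Polynomial A) ^ 2 + X) ^ 2 ^ i) ^ 2
        = ∑ i ∈ Finset.range (m + 1),
            C ((Ssum A m (m + 1 - i) (fun j => Dk (j + 1))) ^ 2)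
              * ((X:Polynomial A) ^ 2 + X) ^ 2 ^ i
          + ((X:Polynomial A) ^ 2 + X) ^ 2 ^ (m + 1) := by
      haveI : ExpChar (Polynomial A) 2 := ExpChar.prime (by norm_num)
      rw [sum_pow_char (p := 2)]
      have hterm : ∀ i ∈ Finset.range (m + 1),
          (C (Ssum A m (m - i) (fun j => Dk (j + 1))) * ((X:Polynomial A) ^ 2 + X) ^ 2 ^ i) ^ 2
          = C ((Ssum A m (m + 1 - (i + 1)) (fun j => Dk (j + 1))) ^ 2)
              * ((X:Polynomial A) ^ 2 + X) ^ 2 ^ (i + 1) := by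
        intro i hi
        have h2 : m + 1 - (i + 1) = m - i := by omega
        rw [h2, mul_pow, ← map_pow, ← pow_mul, ← pow_succ]
      rw [Finset.sum_congr rfl hterm]
      have h' := Finset.sum_range_succ'
        (fun i => C ((Ssum A m (m + 1 - i) (fun j => Dk (j + 1))) ^ 2)
          * ((X:Polynomial A) ^ 2 + X) ^ 2 ^ i) (m + 1)
      have hF0 : C ((Ssum A m (m + 1 - 0) (fun j => Dk (j + 1))) ^ 2)
          * ((X:Polynomial A) ^ 2 + X) ^ 2 ^ 0 = 0 := by
        rw [Nat.sub_zero, Ssum_eq_zero_of_lt (by omega)]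
        simp
      rw [hF0, add_zero] at h'
      rw [← h', Finset.sum_range_succ]
      congr 1
      rw [Nat.sub_self, Ssum_zero_r, one_pow, map_one, one_mul]
    rw [key]
    ring
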